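/- arXiv:1809.05665 — 5 statements merged into one kernel-verified Lean document; each statement's English description precedes it below -/
import Mathlib

section
/- Let 0 < p < 4 and ω² = p/4 with ω ∈ (−1,1). Then the map λ ↦ Q(Φ_λ) = −λ·∫_ℝ φ_λ(x)² dx, defined for λ ∈ (−1,1), is differentiable at λ = ω and its derivative there equals 0. -/
open MeasureTheory Real Filter

/-- The explicit ground state `φ_ω` of `-φ'' + (1-ω²)φ = φ^{p+1}`. -/
noncomputable def phi (p ω : ℝ) : ℝ → ℝ := fun x =>
  ((p + 2) * (1 - ω ^ 2) / 2) ^ (1 / p) *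
    Real.cosh (p / 2 * Real.sqrt (1 - ω ^ 2) * x) ^ (-(2 / p))

/-!
Rescaling `x ↦ (p/2)√(1-λ²) x` gives `∫ φ_λ² = c_p (1-λ²)^α` with `α = 2/p - 1/2`, so
`Q(Φ_λ) = -c_p λ (1-λ²)^α` has derivative `-c_p (1-λ²)^(α-1) (1 - (2α+1) λ²)`.
Since `2α + 1 = 4/p`, the last factor is `1 - 4λ²/p`, which vanishes exactly when `λ² = p/4`.
-/

noncomputable def phiMassConst (p : ℝ) : ℝ :=
  ((p + 2) / 2) ^ (2 / p) * (2 / p) * ∫ x : ℝ, cosh x ^ (-(4 / p))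

lemma integral_phi_sq (p l : ℝ) (hp : 0 < p) (hl : l ^ 2 < 1) :
    ∫ x : ℝ, phi p l x ^ 2 = phiMassConst p * (1 - l ^ 2) ^ (2 / p - 1 / 2) := by
  have ha : 0 < 1 - l ^ 2 := by linarith
  have hk : 0 < p / 2 * √(1 - l ^ 2) := by positivity
  have hsq : ∀ x, phi p l x ^ 2 = ((p + 2) / 2) ^ (2 / p) * (1 - l ^ 2) ^ (2 / p) *
      cosh (p / 2 * √(1 - l ^ 2) * x) ^ (-(4 / p)) := by
    intro x
    rw [phi, mul_pow, ← rpow_mul_natCast (by positivity), ← rpow_mul_natCast (cosh_pos _).le,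
      ← mul_rpow (by positivity) ha.le]
    ring_nf
  have hk_inv : (p / 2 * √(1 - l ^ 2))⁻¹ = 2 / p * (1 - l ^ 2) ^ (-(1 / 2) : ℝ) := by
    rw [mul_inv, sqrt_eq_rpow, ← rpow_neg ha.le]
    ring
  simp_rw [hsq, integral_const_mul, Measure.integral_comp_mul_left (fun y => cosh y ^ (-(4 / p))),
    abs_of_pos (inv_pos.2 hk), smul_eq_mul, hk_inv, phiMassConst, sub_eq_add_neg (2 / p),
    rpow_add ha]
  ring

lemma hasDerivAt_neg_mul_mul_one_sub_sq_rpow (c α l : ℝ) (hl : 1 - l ^ 2 ≠ 0) :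
    HasDerivAt (fun l => -l * (c * (1 - l ^ 2) ^ α))
      (-c * (1 - l ^ 2) ^ (α - 1) * (1 - (2 * α + 1) * l ^ 2)) l := by
  have hbase : HasDerivAt (fun l : ℝ => 1 - l ^ 2) (-(2 * l)) l := by
    simpa using (hasDerivAt_pow 2 l).const_sub 1
  refine ((hasDerivAt_neg l).mul ((hbase.rpow_const (Or.inl hl)).const_mul c)).congr_deriv ?_
  rw [show (1 - l ^ 2) ^ α = (1 - l ^ 2) ^ (α - 1) * (1 - l ^ 2) by
    rw [← rpow_add_one hl, sub_add_cancel]]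
  ring

theorem partialQ_zero_at_critical_general (p ω : ℝ) (hp : 0 < p) (hp4 : p < 4)
    (hcrit : ω ^ 2 = p / 4) :
    HasDerivAt (fun l : ℝ => -l * ∫ x : ℝ, (phi p l x) ^ 2) 0 ω := by
  have hω : ω ^ 2 < 1 := by linarith
  have hQ : (fun l : ℝ => -l * ∫ x : ℝ, (phi p l x) ^ 2) =ᶠ[nhds ω]
      fun l => -l * (phiMassConst p * (1 - l ^ 2) ^ (2 / p - 1 / 2)) := by
    filter_upwards [(isOpen_lt (continuous_pow 2) continuous_const).mem_nhds hω] with l hl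
    rw [integral_phi_sq p l hp hl]
  have hcoeff : 1 - (2 * (2 / p - 1 / 2) + 1) * ω ^ 2 = 0 := by
    rw [hcrit]
    field_simp
    ring
  have hderiv := hasDerivAt_neg_mul_mul_one_sub_sq_rpow (phiMassConst p) (2 / p - 1 / 2) ω
    (by linarith)
  rw [hcoeff, mul_zero] at hderiv
  exact hderiv.congr_of_eventuallyEq hQ

/-- The map `λ ↦ Q(Φ_λ) = -λ ∫ φ_λ²` is differentiable at the critical
frequency `ω` (with `ω² = p/4`) and its derivative there is `0`. -/
theorem partialQ_zero_at_critical (p ω : ℝ) (hp : 0 < p) (hp4 : p < 4)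
    (hω1 : -1 < ω) (hω2 : ω < 1) (hcrit : ω ^ 2 = p / 4) :
    HasDerivAt (fun l : ℝ => -l * ∫ x : ℝ, (phi p l x) ^ 2) 0 ω :=
  partialQ_zero_at_critical_general p ω hp hp4 hcrit
end

section
/- Let p > 0 and ω ∈ (−1,1). Suppose f : ℝ → ℝ is twice continuously differentiable with f ∈ L²(ℝ) and f' ∈ L²(ℝ), g ∈ L²(ℝ), and the pair (f,g) satisfies −f''(x) + f(x) − (p+1)·φ_ω(x)^p·f(x) + ω·g(x) = 0 and g(x) + ω·f(x) = 0 for all x ∈ ℝ (equivalently, (f,g) lies in the kernel of S_ω''(Φ_ω)). Then there exists a constant C ∈ ℝ such that f = C·φ_ω' and g = −C·ω·φ_ω'. -/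
/-!
With `g = -ω f` the first equation reads `f'' = q f` for the linearized potential
`q = 1 - ω² - (p + 1) φ ^ p`, and differentiating the ground state equation shows that `φ'` solves
the same equation. The Wronskian `f φ'' - f' φ'` is therefore constant; since `f, f' ∈ H¹` (as
`f'' = q f` with `q` bounded) they tend to `0` at `+∞`, while `φ'` and `φ''` are bounded, so the
Wronskian vanishes. Evaluated at `0`, where `φ' = 0 ≠ φ''`, it gives `f 0 = 0`; hence `f` and
`C φ'` with `C = f' 0 / φ'' 0` have the same Cauchy data at `0`, and uniqueness for linear ODEs
with bounded coefficient gives `f = C φ'`.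
-/

open MeasureTheory Real Filter

open scoped Topology

section SecondOrderLinear

variable {q y y' z z' : ℝ → ℝ}

theorem secondOrderLinear_solution_unique {M : ℝ} (hq : ∀ x, |q x| ≤ M)
    (hy : ∀ x, HasDerivAt y (y' x) x) (hy' : ∀ x, HasDerivAt y' (q x * y x) x)
    (hz : ∀ x, HasDerivAt z (z' x) x) (hz' : ∀ x, HasDerivAt z' (q x * z x) x)
    {x₀ : ℝ} (h₀ : y x₀ = z x₀) (h₀' : y' x₀ = z' x₀) : y = z := by
  have hv : ∀ t, LipschitzOnWith (max 1 M.toNNReal) (fun w : ℝ × ℝ => (w.2, q t * w.1))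
      Set.univ := by
    intro t
    refine ((LipschitzWith.prod_snd.prodMk
      ((lipschitzWith_smul (q t)).comp LipschitzWith.prod_fst)).weaken ?_).lipschitzOnWith
    rw [mul_one]
    refine max_le_max le_rfl ?_
    rw [← NNReal.coe_le_coe, coe_nnnorm, Real.coe_toNNReal']
    exact (hq t).trans (le_max_left _ _)
  have hsol := ODE_solution_unique_univ (f := fun t => (y t, y' t)) (g := fun t => (z t, z' t))
    (t₀ := x₀) hv (fun t => ⟨(hy t).prodMk (hy' t), trivial⟩)
    (fun t => ⟨(hz t).prodMk (hz' t), trivial⟩) (by simp [h₀, h₀'])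
  exact funext fun t => congrArg Prod.fst (congrFun hsol t)

theorem wronskian_eq_zero_of_tendsto_zero
    (hy : ∀ x, HasDerivAt y (y' x) x) (hy' : ∀ x, HasDerivAt y' (q x * y x) x)
    (hz : ∀ x, HasDerivAt z (z' x) x) (hz' : ∀ x, HasDerivAt z' (q x * z x) x)
    (hy₀ : Tendsto y atTop (𝓝 0)) (hy'₀ : Tendsto y' atTop (𝓝 0))
    (hzb : ∃ M, ∀ x, |z x| ≤ M) (hz'b : ∃ M, ∀ x, |z' x| ≤ M) (x : ℝ) :
    y x * z' x - y' x * z x = 0 := by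
  set W := fun x => y x * z' x - y' x * z x
  have hW : ∀ x, HasDerivAt W 0 x := fun x =>
    (((hy x).mul (hz' x)).sub ((hy' x).mul (hz x))).congr_deriv (by ring)
  have hW_const : ∀ x, W x = W 0 := fun x =>
    is_const_of_deriv_eq_zero (fun x => (hW x).differentiableAt) (fun x => (hW x).deriv) x 0
  have hW_lim : Tendsto W atTop (𝓝 0) := by
    obtain ⟨M, hM⟩ := hzb
    obtain ⟨M', hM'⟩ := hz'b
    simpa using (hy₀.zero_mul_isBoundedUnder_le (isBoundedUnder_of ⟨M', fun x => hM' x⟩)).sub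
      (hy'₀.zero_mul_isBoundedUnder_le (isBoundedUnder_of ⟨M, fun x => hM x⟩))
  show W x = 0
  rw [hW_const x]
  exact tendsto_nhds_unique (tendsto_const_nhds.congr fun x => (hW_const x).symm) hW_lim

end SecondOrderLinear

theorem tendsto_atTop_zero_of_integrable_sq {h : ℝ → ℝ} (hd : Differentiable ℝ h)
    (h₂ : Integrable fun x => h x ^ 2) (hd₂ : Integrable fun x => deriv h x ^ 2) :
    Tendsto h atTop (𝓝 0) := by
  have hsq_deriv : ∀ x, HasDerivAt (fun x => h x ^ 2) (2 * h x * deriv h x) x := fun x => by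
    simpa using (hd x).hasDerivAt.fun_pow 2
  have hsq_deriv_int : Integrable fun x => 2 * h x * deriv h x := by
    refine (h₂.add hd₂).mono
      ((hd.continuous.measurable.const_mul 2).mul (measurable_deriv h)).aestronglyMeasurable ?_
    filter_upwards with x
    simp only [Real.norm_eq_abs, Pi.add_apply, abs_mul, abs_two]
    rw [abs_of_nonneg (by positivity : 0 ≤ h x ^ 2 + deriv h x ^ 2)]
    nlinarith [sq_abs (h x), sq_abs (deriv h x), sq_nonneg (|h x| - |deriv h x|)]
  have hsq : Tendsto (fun x => h x ^ 2) atTop (𝓝 0) :=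
    tendsto_zero_of_hasDerivAt_of_integrableOn_Ioi (a := 0) (fun x _ => hsq_deriv x)
      hsq_deriv_int.integrableOn h₂.integrableOn
  rw [tendsto_zero_iff_abs_tendsto_zero]
  simpa [Function.comp_def, Real.sqrt_sq_eq_abs] using (Real.continuous_sqrt.tendsto 0).comp hsq

theorem integrable_sq_of_abs_le_mul {α : Type*} [MeasurableSpace α] {μ : Measure α} {f g : α → ℝ}
    {M : ℝ} (hg : AEStronglyMeasurable g μ) (hf : Integrable (fun x => f x ^ 2) μ)
    (hgf : ∀ x, |g x| ≤ M * |f x|) : Integrable (fun x => g x ^ 2) μ := by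
  refine (hf.const_mul (M ^ 2)).mono (hg.pow 2) (Eventually.of_forall fun x => ?_)
  calc ‖g x ^ 2‖ = |g x| ^ 2 := by rw [Real.norm_eq_abs, abs_pow]
    _ ≤ (M * |f x|) ^ 2 := pow_le_pow_left₀ (abs_nonneg _) (hgf x) 2
    _ = ‖M ^ 2 * f x ^ 2‖ := by rw [mul_pow, sq_abs, Real.norm_of_nonneg (by positivity)]

theorem Real.hasDerivAt_tanh (x : ℝ) : HasDerivAt tanh (1 / cosh x ^ 2) x := by
  have h := (hasDerivAt_sinh x).div (hasDerivAt_cosh x) (cosh_pos x).ne'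
  rw [show tanh = fun x => sinh x / cosh x from funext tanh_eq_sinh_div_cosh]
  refine h.congr_deriv ?_
  rw [← cosh_sq_sub_sinh_sq x]
  ring

theorem hasDerivAt_cosh_mul_rpow (b c x : ℝ) :
    HasDerivAt (fun x => cosh (b * x) ^ c) (b * c * tanh (b * x) * cosh (b * x) ^ c) x := by
  have h := ((hasDerivAt_cosh (b * x)).comp x ((hasDerivAt_id x).const_mul b)).rpow_const
    (p := c) (Or.inl (cosh_pos _).ne')
  refine h.congr_deriv ?_
  simp only [Function.comp_apply, rpow_sub_one (cosh_pos _).ne', tanh_eq_sinh_div_cosh]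
  ring

noncomputable def phiAmp (p ω : ℝ) : ℝ := ((p + 2) * (1 - ω ^ 2) / 2) ^ (1 / p)

noncomputable def phiRate (p ω : ℝ) : ℝ := p / 2 * √(1 - ω ^ 2)

noncomputable def linearizedPotential (p ω : ℝ) (x : ℝ) : ℝ :=
  1 - ω ^ 2 - (p + 1) * phi p ω x ^ p

section GroundState

variable {p ω : ℝ}

theorem phi_eq (x : ℝ) : phi p ω x = phiAmp p ω * cosh (phiRate p ω * x) ^ (-(2 / p)) := rfl

theorem phiAmp_pos (hp : 0 < p) (hω : ω ^ 2 < 1) : 0 < phiAmp p ω :=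
  rpow_pos_of_pos (by nlinarith) _

theorem phiAmp_rpow (hp : 0 < p) (hω : ω ^ 2 ≤ 1) :
    phiAmp p ω ^ p = (p + 2) * (1 - ω ^ 2) / 2 := by
  rw [phiAmp, ← rpow_mul (by nlinarith), one_div_mul_cancel hp.ne', rpow_one]

theorem phiAmp_nonneg (hp : 0 < p) (hω : ω ^ 2 ≤ 1) : 0 ≤ phiAmp p ω :=
  rpow_nonneg (by nlinarith) _

theorem phi_nonneg (hp : 0 < p) (hω : ω ^ 2 ≤ 1) (x : ℝ) : 0 ≤ phi p ω x :=
  mul_nonneg (phiAmp_nonneg hp hω) (rpow_nonneg (cosh_pos _).le _)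

theorem phi_le_phiAmp (hp : 0 < p) (hω : ω ^ 2 ≤ 1) (x : ℝ) : phi p ω x ≤ phiAmp p ω :=
  mul_le_of_le_one_right (phiAmp_nonneg hp hω)
    (rpow_le_one_of_one_le_of_nonpos (one_le_cosh _) (by rw [neg_nonpos]; positivity))

theorem phi_rpow (hp : 0 < p) (hω : ω ^ 2 ≤ 1) (x : ℝ) :
    phi p ω x ^ p = (p + 2) * (1 - ω ^ 2) / 2 / cosh (phiRate p ω * x) ^ 2 := by
  rw [phi_eq, mul_rpow (phiAmp_nonneg hp hω) (rpow_nonneg (cosh_pos _).le _),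
    phiAmp_rpow hp hω, ← rpow_mul (cosh_pos _).le,
    show -(2 / p) * p = -(2 : ℕ) by push_cast; field_simp, rpow_neg (cosh_pos _).le, rpow_natCast, div_eq_mul_inv _ (cosh _ ^ 2)]

theorem rpow_phi_le (hp : 0 < p) (hω : ω ^ 2 ≤ 1) (x : ℝ) : phi p ω x ^ p ≤ phiAmp p ω ^ p :=
  rpow_le_rpow (phi_nonneg hp hω x) (phi_le_phiAmp hp hω x) hp.le

theorem hasDerivAt_phi (hp : 0 < p) (x : ℝ) :
    HasDerivAt (phi p ω) (-√(1 - ω ^ 2) * tanh (phiRate p ω * x) * phi p ω x) x := by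
  refine ((hasDerivAt_cosh_mul_rpow _ _ x).const_mul (phiAmp p ω)).congr_deriv ?_
  rw [phi_eq, phiRate]
  field_simp

theorem deriv_phi (hp : 0 < p) :
    deriv (phi p ω) = fun x => -√(1 - ω ^ 2) * tanh (phiRate p ω * x) * phi p ω x :=
  funext fun x => (hasDerivAt_phi hp x).deriv

theorem hasDerivAt_deriv_phi (hp : 0 < p) (hω : ω ^ 2 ≤ 1) (x : ℝ) :
    HasDerivAt (deriv (phi p ω)) ((1 - ω ^ 2) * phi p ω x - phi p ω x ^ p * phi p ω x) x := by
  have h := (((hasDerivAt_tanh _).comp x ((hasDerivAt_id x).const_mul (phiRate p ω))).const_mul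
    (-√(1 - ω ^ 2))).mul (hasDerivAt_phi (ω := ω) hp x)
  rw [deriv_phi hp]
  refine h.congr_deriv ?_
  simp only [Function.comp_apply, id, mul_one, phi_rpow hp hω]
  set t := phiRate p ω * x
  set s := √(1 - ω ^ 2)
  have hs : s ^ 2 = 1 - ω ^ 2 := sq_sqrt (by linarith)
  have hT : tanh t ^ 2 = 1 - 1 / cosh t ^ 2 := by
    have hc := cosh_sq_sub_sinh_sq t
    rw [tanh_eq_sinh_div_cosh]
    field_simp
    linarith
  rw [show phiRate p ω = p / 2 * s from rfl]
  linear_combination s ^ 2 * phi p ω x * hT + (1 - (p + 2) / (2 * cosh t ^ 2)) * phi p ω x * hs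

theorem deriv_deriv_phi (hp : 0 < p) (hω : ω ^ 2 ≤ 1) :
    deriv (deriv (phi p ω)) = fun x => (1 - ω ^ 2) * phi p ω x - phi p ω x ^ p * phi p ω x :=
  funext fun x => (hasDerivAt_deriv_phi hp hω x).deriv

theorem hasDerivAt_deriv_deriv_phi (hp : 0 < p) (hω : ω ^ 2 ≤ 1) (x : ℝ) :
    HasDerivAt (deriv (deriv (phi p ω))) (linearizedPotential p ω x * deriv (phi p ω) x) x := by
  have hφ := hasDerivAt_phi (ω := ω) hp x
  have h := (hφ.const_mul (1 - ω ^ 2)).sub (hφ.rpow_const (p := p + 1) (Or.inr (by linarith)))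
  have hφ'' : deriv (deriv (phi p ω)) = fun y => (1 - ω ^ 2) * phi p ω y - phi p ω y ^ (p + 1) := by
    rw [deriv_deriv_phi hp hω]
    funext y
    rw [rpow_add_one' (phi_nonneg hp hω y) (by linarith)]
  rw [hφ'', hφ.deriv, linearizedPotential]
  exact h.congr_deriv (by rw [add_sub_cancel_right]; ring)

theorem abs_deriv_phi_le (hp : 0 < p) (hω : ω ^ 2 ≤ 1) (x : ℝ) :
    |deriv (phi p ω) x| ≤ √(1 - ω ^ 2) * phiAmp p ω := by
  rw [deriv_phi hp, abs_mul, abs_mul, abs_neg, abs_of_nonneg (sqrt_nonneg _),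
    abs_of_nonneg (phi_nonneg hp hω x), mul_assoc]
  gcongr
  calc |tanh (phiRate p ω * x)| * phi p ω x ≤ 1 * phiAmp p ω :=
        mul_le_mul (abs_tanh_lt_one _).le (phi_le_phiAmp hp hω x) (phi_nonneg hp hω x) zero_le_one
    _ = phiAmp p ω := one_mul _

theorem abs_deriv_deriv_phi_le (hp : 0 < p) (hω : ω ^ 2 ≤ 1) (x : ℝ) :
    |deriv (deriv (phi p ω)) x| ≤ (1 - ω ^ 2 + phiAmp p ω ^ p) * phiAmp p ω := by
  have h₀ := phi_nonneg hp hω x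
  have h₁ := phi_le_phiAmp hp hω x
  have h₂ := rpow_phi_le hp hω x
  have h₃ : 0 ≤ phi p ω x ^ p := rpow_nonneg h₀ p
  rw [deriv_deriv_phi hp hω, abs_le]
  constructor <;> nlinarith

theorem abs_linearizedPotential_le (hp : 0 < p) (hω : ω ^ 2 ≤ 1) (x : ℝ) :
    |linearizedPotential p ω x| ≤ 1 - ω ^ 2 + (p + 1) * phiAmp p ω ^ p := by
  have h₂ := rpow_phi_le hp hω x
  have h₃ : 0 ≤ phi p ω x ^ p := rpow_nonneg (phi_nonneg hp hω x) p
  rw [linearizedPotential, abs_le]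
  constructor <;> nlinarith

theorem deriv_phi_zero (hp : 0 < p) : deriv (phi p ω) 0 = 0 := by
  simp [deriv_phi hp]

theorem deriv_deriv_phi_zero_ne (hp : 0 < p) (hω : ω ^ 2 < 1) : deriv (deriv (phi p ω)) 0 ≠ 0 := by
  have hA : phi p ω 0 = phiAmp p ω := by simp [phi_eq]
  simp only [deriv_deriv_phi hp hω.le, hA, phiAmp_rpow hp hω.le]
  rw [show (1 - ω ^ 2) * phiAmp p ω - (p + 2) * (1 - ω ^ 2) / 2 * phiAmp p ω
      = -(p / 2 * (1 - ω ^ 2) * phiAmp p ω) by ring]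
  exact neg_ne_zero.mpr (mul_pos (mul_pos (by positivity) (by linarith)) (phiAmp_pos hp hω)).ne'

end GroundState

theorem kernel_of_hessian_general (p ω : ℝ) (hp : 0 < p) (hω1 : -1 < ω) (hω2 : ω < 1)
    (f g : ℝ → ℝ) (hf : ContDiff ℝ 2 f)
    (hfL2 : Integrable (fun x => (f x) ^ 2))
    (hf'L2 : Integrable (fun x => (deriv f x) ^ 2))
    (heq1 : ∀ x : ℝ,
      -(deriv (deriv f) x) + f x - (p + 1) * (phi p ω x) ^ p * f x + ω * g x = 0)
    (heq2 : ∀ x : ℝ, g x + ω * f x = 0) :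
    ∃ C : ℝ, f = (fun x => C * deriv (phi p ω) x) ∧
      g = (fun x => -C * ω * deriv (phi p ω) x) := by
  have hω : ω ^ 2 < 1 := by nlinarith
  set q := linearizedPotential p ω
  have hq := abs_linearizedPotential_le hp hω.le
  have hf'' : ∀ x, deriv (deriv f) x = q x * f x := fun x => by
    simp only [q, linearizedPotential]
    linear_combination -heq1 x + ω * heq2 x
  have hdf : ∀ x, HasDerivAt f (deriv f x) x :=
    fun x => (hf.differentiable (by norm_num) x).hasDerivAt
  have hdf' : ∀ x, HasDerivAt (deriv f) (q x * f x) x :=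
    fun x => hf'' x ▸ (hf.differentiable_deriv_two x).hasDerivAt
  have hf_lim := tendsto_atTop_zero_of_integrable_sq (hf.differentiable (by norm_num)) hfL2 hf'L2
  have hf'_lim := tendsto_atTop_zero_of_integrable_sq hf.differentiable_deriv_two hf'L2
    (integrable_sq_of_abs_le_mul (measurable_deriv _).aestronglyMeasurable hfL2
      fun x => by rw [hf'' x, abs_mul]; gcongr; exact hq x)
  have hdφ : ∀ x, HasDerivAt (deriv (phi p ω)) (deriv (deriv (phi p ω)) x) x :=
    fun x => (hasDerivAt_deriv_phi hp hω.le x).differentiableAt.hasDerivAt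
  have hdφ' := hasDerivAt_deriv_deriv_phi hp hω.le
  have hW := wronskian_eq_zero_of_tendsto_zero hdf hdf' hdφ hdφ' hf_lim hf'_lim
    ⟨_, abs_deriv_phi_le hp hω.le⟩ ⟨_, abs_deriv_deriv_phi_le hp hω.le⟩ 0
  have hf₀ : f 0 = 0 := by
    simpa [deriv_phi_zero hp, deriv_deriv_phi_zero_ne hp hω] using hW
  set C := deriv f 0 / deriv (deriv (phi p ω)) 0
  have hfC : f = fun x => C * deriv (phi p ω) x :=
    secondOrderLinear_solution_unique hq hdf hdf' (fun x => (hdφ x).const_mul C)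
      (fun x => ((hdφ' x).const_mul C).congr_deriv (by ring)) (x₀ := 0)
      (by simp [hf₀, deriv_phi_zero hp]) (div_mul_cancel₀ _ (deriv_deriv_phi_zero_ne hp hω)).symm
  refine ⟨C, hfC, funext fun x => ?_⟩
  linear_combination heq2 x - ω * congrFun hfC x

/-- Kernel of the Hessian `S_ω''(Φ_ω)`: any `H¹ × L²` pair `(f,g)` with
`-f'' + f - (p+1)φ_ω^p f + ω g = 0` and `g + ω f = 0` is a multiple of
`∂ₓΦ_ω = (φ_ω', -ω φ_ω')`. -/
theorem kernel_of_hessian (p ω : ℝ) (hp : 0 < p) (hω1 : -1 < ω) (hω2 : ω < 1)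
    (f g : ℝ → ℝ) (hf : ContDiff ℝ 2 f)
    (hfL2 : Integrable (fun x => (f x) ^ 2))
    (hf'L2 : Integrable (fun x => (deriv f x) ^ 2))
    (hgL2 : Integrable (fun x => (g x) ^ 2))
    (heq1 : ∀ x : ℝ,
      -(deriv (deriv f) x) + f x - (p + 1) * (phi p ω x) ^ p * f x + ω * g x = 0)
    (heq2 : ∀ x : ℝ, g x + ω * f x = 0) :
    ∃ C : ℝ, f = (fun x => C * deriv (phi p ω) x) ∧
      g = (fun x => -C * ω * deriv (phi p ω) x) :=
  kernel_of_hessian_general p ω hp hω1 hω2 f g hf hfL2 hf'L2 heq1 heq2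
end

section
/- Let p > 0 and ω ∈ (−1,1). Suppose λ₋₁ < 0 and ζ : ℝ → ℝ is a twice differentiable function, not identically zero, satisfying −ζ''(x) + (1−ω²)ζ(x) − (p+1)φ_ω(x)^p ζ(x) = λ₋₁·ζ(x) for all x. Define μ₀ = (1/2)·( λ₋₁ + ω² + 1 − √( λ₋₁² + 2(ω²−1)λ₋₁ + (ω²+1)² ) ). Then μ₀ < 0, μ₀·( ω²/(1−μ₀) + 1 ) = λ₋₁, and the pair (ξ, g) = ( ζ, ω·ζ/(μ₀−1) ) satisfies the eigenvector equations −ξ'' + ξ − (p+1)φ_ω^p ξ + ω·g = μ₀·ξ and g + ω·ξ = μ₀·g on ℝ; that is, S_ω''(Φ_ω)(ξ,g) = μ₀·(ξ,g). -/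
open MeasureTheory Real Filter

/-!
Substituting `g = ω ξ / (μ - 1)` from the second eigenvector equation into the first turns it
into the scalar equation for `ξ` with eigenvalue `μ - ω² / (μ - 1)`. This equals `λ₋₁` exactly
when `μ² - (λ₋₁ + ω² + 1) μ + λ₋₁ = 0`, and `μ₀` is the smaller root of that quadratic, which is
negative because the product of its roots is `λ₋₁ < 0`.
-/

noncomputable def lowerRoot (b c : ℝ) : ℝ := (b - √(b ^ 2 - 4 * c)) / 2

lemma lowerRoot_isRoot {b c : ℝ} (h : 4 * c ≤ b ^ 2) :
    lowerRoot b c ^ 2 - b * lowerRoot b c + c = 0 := by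
  have hs : √(b ^ 2 - 4 * c) ^ 2 = b ^ 2 - 4 * c := sq_sqrt (by linarith)
  rw [lowerRoot]
  linear_combination hs / 4

lemma lowerRoot_neg {b c : ℝ} (hc : c < 0) : lowerRoot b c < 0 := by
  have : b < √(b ^ 2 - 4 * c) := lt_sqrt_of_sq_lt (by linarith)
  rw [lowerRoot]
  linarith

section RootOfQuadratic

variable {lam ω μ : ℝ}

lemma mul_sq_div_one_sub_add_one_of_isRoot (hμ : μ ≠ 1)
    (hroot : μ ^ 2 - (lam + ω ^ 2 + 1) * μ + lam = 0) :
    μ * (ω ^ 2 / (1 - μ) + 1) = lam := by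
  have : 1 - μ ≠ 0 := sub_ne_zero.2 hμ.symm
  field_simp
  linear_combination -hroot

lemma mul_mul_div_sub_one_of_isRoot (hμ : μ ≠ 1)
    (hroot : μ ^ 2 - (lam + ω ^ 2 + 1) * μ + lam = 0) (z : ℝ) :
    ω * (ω * z / (μ - 1)) = (μ - lam - ω ^ 2) * z := by
  have : μ - 1 ≠ 0 := sub_ne_zero.2 hμ
  field_simp
  linear_combination -z * hroot

end RootOfQuadratic

lemma div_sub_one_add_self {μ : ℝ} (hμ : μ ≠ 1) (y : ℝ) :
    y / (μ - 1) + y = μ * (y / (μ - 1)) := by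
  have : μ - 1 ≠ 0 := sub_ne_zero.2 hμ
  field_simp
  ring

theorem negative_eigenvalue_of_hessian_general (p ω : ℝ)
    (lam μ₀ : ℝ) (hlam : lam < 0)
    (ζ : ℝ → ℝ)
    (heig : ∀ x : ℝ,
      -(deriv (deriv ζ) x) + (1 - ω ^ 2) * ζ x - (p + 1) * (phi p ω x) ^ p * ζ x
        = lam * ζ x)
    (hμ : μ₀ = (1 / 2) * (lam + ω ^ 2 + 1 -
      Real.sqrt (lam ^ 2 + 2 * (ω ^ 2 - 1) * lam + (ω ^ 2 + 1) ^ 2))) :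
    μ₀ < 0 ∧ μ₀ * (ω ^ 2 / (1 - μ₀) + 1) = lam ∧
    (∀ x : ℝ,
      -(deriv (deriv ζ) x) + ζ x - (p + 1) * (phi p ω x) ^ p * ζ x
        + ω * (ω * ζ x / (μ₀ - 1)) = μ₀ * ζ x) ∧
    (∀ x : ℝ, ω * ζ x / (μ₀ - 1) + ω * ζ x = μ₀ * (ω * ζ x / (μ₀ - 1))) := by
  have hμ_eq : μ₀ = lowerRoot (lam + ω ^ 2 + 1) lam := by
    rw [hμ, lowerRoot]
    ring_nf
  have hneg : μ₀ < 0 := hμ_eq ▸ lowerRoot_neg hlam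
  have hroot : μ₀ ^ 2 - (lam + ω ^ 2 + 1) * μ₀ + lam = 0 :=
    hμ_eq ▸ lowerRoot_isRoot (by linarith [sq_nonneg (lam + ω ^ 2 + 1)])
  have hne : μ₀ ≠ 1 := by linarith
  refine ⟨hneg, mul_sq_div_one_sub_add_one_of_isRoot hne hroot, fun x => ?_,
    fun x => div_sub_one_add_self hne _⟩
  rw [mul_mul_div_sub_one_of_isRoot hne hroot]
  linarith [heig x]

/-- From the negative eigenvalue `λ₋₁` of the scalar operator
`-∂ₓ² + (1-ω²) - (p+1)φ_ω^p` with eigenvector `ζ`, one obtains a negative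
eigenvalue `μ₀` of the Hessian `S_ω''(Φ_ω)` with eigenvector
`(ζ, ωζ/(μ₀-1))`. -/
theorem negative_eigenvalue_of_hessian (p ω : ℝ) (hp : 0 < p)
    (hω1 : -1 < ω) (hω2 : ω < 1) (lam μ₀ : ℝ) (hlam : lam < 0)
    (ζ : ℝ → ℝ) (hζ1 : Differentiable ℝ ζ) (hζ2 : Differentiable ℝ (deriv ζ))
    (hζ0 : ζ ≠ 0)
    (heig : ∀ x : ℝ,
      -(deriv (deriv ζ) x) + (1 - ω ^ 2) * ζ x - (p + 1) * (phi p ω x) ^ p * ζ x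
        = lam * ζ x)
    (hμ : μ₀ = (1 / 2) * (lam + ω ^ 2 + 1 -
      Real.sqrt (lam ^ 2 + 2 * (ω ^ 2 - 1) * lam + (ω ^ 2 + 1) ^ 2))) :
    μ₀ < 0 ∧ μ₀ * (ω ^ 2 / (1 - μ₀) + 1) = lam ∧
    (∀ x : ℝ,
      -(deriv (deriv ζ) x) + ζ x - (p + 1) * (phi p ω x) ^ p * ζ x
        + ω * (ω * ζ x / (μ₀ - 1)) = μ₀ * ζ x) ∧
    (∀ x : ℝ, ω * ζ x / (μ₀ - 1) + ω * ζ x = μ₀ * (ω * ζ x / (μ₀ - 1))) :=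
  negative_eigenvalue_of_hessian_general p ω lam μ₀ hlam ζ heig hμ
end

section
/- Let p > 0 and ω ∈ (−1,1). For each x ∈ ℝ the map λ ↦ φ_λ(x) (λ ∈ (−1,1)) is differentiable, and its derivative ∂_ωφ_ω(x) at λ = ω satisfies the differential equation −∂_x²(∂_ωφ_ω)(x) + (1−ω²)·∂_ωφ_ω(x) − (p+1)·φ_ω(x)^p·∂_ωφ_ω(x) = 2ω·φ_ω(x) for all x ∈ ℝ. Consequently, for ω ≠ 0, the pair ψ_ω = (1/(2ω))·(∂_ωφ_ω, −ω·∂_ωφ_ω) satisfies S_ω''(Φ_ω)ψ_ω = (φ_ω, 0). -/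
open MeasureTheory Real Filter

/-- `∂_ωφ_ω(x)` : derivative of `λ ↦ φ_λ(x)` at `λ = ω`. -/
noncomputable def dphi (p ω : ℝ) (x : ℝ) : ℝ := deriv (fun m : ℝ => phi p m x) ω

/-!
With `k = √(1-ω²)` the ground state is a rescaling of the profile `u = φ_0`:
`φ_ω(x) = k^{2/p} u(kx)`, where `u'' = u - u^{p+1}`. Hence `∂_ωφ_ω = k'(ω) ∂_kφ_ω`, and the
claimed equation is the `k`-derivative of the rescaled equation `-v'' + k²v = v^{p+1}`: for any
solution `u`, the operator `-∂ₓ² + k² - (p+1)(k^{2/p}u(k·))^p` sends `∂_k(k^{2/p}u(k·))` to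
`-2k·k^{2/p}u(k·)`, which becomes `2ωφ_ω` after multiplication by `k'(ω) = -ω/k`. The claims
about `ψ_ω` are linear consequences of this one.
-/

section Rescaling

variable {u u' : ℝ → ℝ} {p k : ℝ}

noncomputable def rescale (u : ℝ → ℝ) (p k x : ℝ) : ℝ := k ^ (2 / p) * u (k * x)

noncomputable def rescaleDeriv (u u' : ℝ → ℝ) (p k x : ℝ) : ℝ :=
  k ^ (2 / p) * (2 / p * u (k * x) / k + x * u' (k * x))

theorem hasDerivAt_rescale_param (hu : ∀ y, HasDerivAt u (u' y) y) (hk : 0 < k) (x : ℝ) :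
    HasDerivAt (fun k => rescale u p k x) (rescaleDeriv u u' p k x) k := by
  have hpow := (hasDerivAt_id k).rpow_const (p := 2 / p) (Or.inl hk.ne')
  have hu_k := (hu (k * x)).comp k (hasDerivAt_mul_const x)
  refine (hpow.mul hu_k).congr_deriv ?_
  simp only [rescaleDeriv, id, Function.comp_def]
  rw [rpow_sub_one hk.ne']
  field_simp

theorem hasDerivAt_rescaleDeriv (hu : ∀ y, HasDerivAt u (u' y) y)
    (hu' : ∀ y, HasDerivAt u' (u y - u y ^ (p + 1)) y) (hk : k ≠ 0) (x : ℝ) :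
    HasDerivAt (rescaleDeriv u u' p k)
      (k ^ (2 / p) * ((2 / p + 1) * u' (k * x) + k * x * (u (k * x) - u (k * x) ^ (p + 1)))) x := by
  have hu_k := (hu (k * x)).comp x (hasDerivAt_const_mul k)
  have hu'_k := (hu' (k * x)).comp x (hasDerivAt_const_mul k)
  refine ((((hu_k.const_mul (2 / p)).div_const k).add
    ((hasDerivAt_id x).mul hu'_k)).const_mul (k ^ (2 / p))).congr_deriv ?_
  simp only [id, Function.comp_def]
  field_simp
  ring

theorem hasDerivAt_deriv_rescaleDeriv (hp : 0 ≤ p) (hu : ∀ y, HasDerivAt u (u' y) y)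
    (hu' : ∀ y, HasDerivAt u' (u y - u y ^ (p + 1)) y) (hk : k ≠ 0) (x : ℝ) :
    HasDerivAt (deriv (rescaleDeriv u u' p k))
      (k ^ (2 / p) * k * ((2 / p + 2) * (u (k * x) - u (k * x) ^ (p + 1))
        + k * x * u' (k * x) * (1 - (p + 1) * u (k * x) ^ p))) x := by
  have hu_k := (hu (k * x)).comp x (hasDerivAt_const_mul k)
  have hu'_k := (hu' (k * x)).comp x (hasDerivAt_const_mul k)
  have hpow : HasDerivAt (fun x => u (k * x) ^ (p + 1))
      (u' (k * x) * k * (p + 1) * u (k * x) ^ p) x := by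
    simpa using hu_k.rpow_const (p := p + 1) (Or.inr (by linarith))
  rw [funext fun x => (hasDerivAt_rescaleDeriv hu hu' hk x).deriv]
  refine ((((hu'_k.const_mul (2 / p + 1)).add
    (((hasDerivAt_const_mul k).mul (hu_k.sub hpow))))).const_mul (k ^ (2 / p))).congr_deriv ?_
  simp only [Function.comp_def, Pi.sub_apply]
  ring

theorem rescale_rpow {x : ℝ} (hp : 0 < p) (hk : 0 ≤ k) (hu : 0 ≤ u (k * x)) :
    rescale u p k x ^ p = k ^ 2 * u (k * x) ^ p := by
  rw [rescale, mul_rpow (rpow_nonneg hk _) hu, ← rpow_mul hk, div_mul_cancel₀ _ hp.ne',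
    rpow_two]

theorem linearized_rescaleDeriv (hp : 0 < p) (hu : ∀ y, HasDerivAt u (u' y) y)
    (hu' : ∀ y, HasDerivAt u' (u y - u y ^ (p + 1)) y) (hu_nonneg : ∀ y, 0 ≤ u y) (hk : 0 < k)
    (x : ℝ) :
    -deriv (deriv (rescaleDeriv u u' p k)) x + k ^ 2 * rescaleDeriv u u' p k x
      - (p + 1) * rescale u p k x ^ p * rescaleDeriv u u' p k x = -2 * k * rescale u p k x := by
  rw [(hasDerivAt_deriv_rescaleDeriv hp.le hu hu' hk.ne' x).deriv,
    rescale_rpow hp hk.le (hu_nonneg _), rpow_add_one' (hu_nonneg _) (by linarith)]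
  simp only [rescaleDeriv, rescale]
  field_simp
  ring

end Rescaling

section GroundProfile

theorem phi_zero_apply (p y : ℝ) :
    phi p 0 y = ((p + 2) / 2) ^ (1 / p) * cosh (p / 2 * y) ^ (-(2 / p)) := by
  simp [phi]

variable {p : ℝ}

theorem phi_zero_nonneg (hp : 0 < p) (y : ℝ) : 0 ≤ phi p 0 y := by
  rw [phi_zero_apply]; positivity

theorem phi_zero_rpow (hp : 0 < p) (y : ℝ) :
    phi p 0 y ^ p = (p + 2) / 2 / cosh (p / 2 * y) ^ 2 := by
  have hC := cosh_pos (p / 2 * y)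
  rw [phi_zero_apply, mul_rpow (by positivity) (by positivity), ← rpow_mul (by positivity),
    ← rpow_mul hC.le, one_div_mul_cancel hp.ne', rpow_one, neg_mul, div_mul_cancel₀ _ hp.ne',
    rpow_neg hC.le, rpow_two]
  ring

theorem hasDerivAt_phi_zero (hp : 0 < p) (y : ℝ) :
    HasDerivAt (phi p 0) (-tanh (p / 2 * y) * phi p 0 y) y := by
  have hC := cosh_pos (p / 2 * y)
  have h := (((hasDerivAt_const_mul (p / 2)).cosh).rpow_const (p := -(2 / p))
    (Or.inl hC.ne')).const_mul (((p + 2) / 2) ^ (1 / p))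
  rw [show phi p 0 = _ from funext (phi_zero_apply p)]
  refine h.congr_deriv ?_
  rw [rpow_sub_one hC.ne', tanh_eq_sinh_div_cosh]
  field_simp

theorem hasDerivAt_neg_tanh_mul_phi_zero (hp : 0 < p) (y : ℝ) :
    HasDerivAt (fun y => -tanh (p / 2 * y) * phi p 0 y) (phi p 0 y - phi p 0 y ^ (p + 1)) y := by
  have hC := cosh_pos (p / 2 * y)
  have hlin : HasDerivAt (fun y => p / 2 * y) (p / 2) y := hasDerivAt_const_mul (p / 2)
  have h := ((hlin.sinh.div hlin.cosh hC.ne').neg).mul (hasDerivAt_phi_zero hp y)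
  simp only [Pi.neg_apply, Pi.div_apply, tanh_eq_sinh_div_cosh] at h ⊢
  refine h.congr_deriv ?_
  rw [rpow_add_one' (phi_zero_nonneg hp y) (by linarith), phi_zero_rpow hp]
  have hpyth := cosh_sq_sub_sinh_sq (p / 2 * y)
  generalize p / 2 * y = z at *
  field_simp
  linear_combination (-(p + 2) * phi p 0 y) * hpyth

end GroundProfile

theorem phi_eq_rescale {p ω : ℝ} (hp : 0 < p) (hω : ω ^ 2 ≤ 1) (x : ℝ) :
    phi p ω x = rescale (phi p 0) p √(1 - ω ^ 2) x := by
  rw [phi, rescale, phi_zero_apply]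
  set k := √(1 - ω ^ 2) with hk
  have hk0 : 0 ≤ k := sqrt_nonneg _
  have hk2 : (p + 2) * (1 - ω ^ 2) / 2 = k ^ (2 : ℝ) * ((p + 2) / 2) := by
    rw [rpow_two, hk, sq_sqrt (sub_nonneg.2 hω)]; ring
  rw [hk2, mul_rpow (by positivity) (by positivity), ← rpow_mul hk0]
  ring_nf

theorem hasDerivAt_phi_param {p ω : ℝ} (hp : 0 < p) (hω : ω ^ 2 < 1) (x : ℝ) :
    HasDerivAt (fun m => phi p m x)
      (-(ω / √(1 - ω ^ 2)) * rescaleDeriv (phi p 0)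
        (fun y => -tanh (p / 2 * y) * phi p 0 y) p √(1 - ω ^ 2) x) ω := by
  have hs : 0 < 1 - ω ^ 2 := by linarith
  have hk : HasDerivAt (fun m => √(1 - m ^ 2)) (-(ω / √(1 - ω ^ 2))) ω := by
    refine (((hasDerivAt_pow 2 ω).const_sub 1).sqrt hs.ne').congr_deriv ?_
    field_simp
    ring
  have hrescale := (hasDerivAt_rescale_param (p := p) (hasDerivAt_phi_zero hp)
    (sqrt_pos.2 hs) x).comp ω hk
  rw [mul_comm]
  refine hrescale.congr_of_eventuallyEq ?_
  filter_upwards [(isOpen_lt (continuous_pow 2) continuous_const).mem_nhds hω] with m hm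
  exact phi_eq_rescale hp hm.le x

/-- The map `λ ↦ φ_λ(x)` is differentiable on `(-1,1)`, the derivative
`∂_ωφ_ω` satisfies `-∂ₓ²(∂_ωφ_ω) + (1-ω²)∂_ωφ_ω - (p+1)φ_ω^p ∂_ωφ_ω = 2ωφ_ω`,
and hence, for `ω ≠ 0`, `ψ_ω = (1/(2ω))(∂_ωφ_ω, -ω∂_ωφ_ω)` satisfies
`S_ω''(Φ_ω)ψ_ω = (φ_ω, 0)`. -/
theorem derivative_in_frequency (p ω : ℝ) (hp : 0 < p)
    (hω1 : -1 < ω) (hω2 : ω < 1) :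
    (∀ x : ℝ, ∀ l : ℝ, -1 < l → l < 1 →
      DifferentiableAt ℝ (fun m : ℝ => phi p m x) l) ∧
    (∀ x : ℝ,
      -(deriv (deriv (dphi p ω)) x) + (1 - ω ^ 2) * dphi p ω x
        - (p + 1) * (phi p ω x) ^ p * dphi p ω x = 2 * ω * phi p ω x) ∧
    (ω ≠ 0 →
      (∀ x : ℝ,
        -(deriv (deriv (fun x' => 1 / (2 * ω) * dphi p ω x')) x)
          + 1 / (2 * ω) * dphi p ω x
          - (p + 1) * (phi p ω x) ^ p * (1 / (2 * ω) * dphi p ω x)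
          + ω * (1 / (2 * ω) * (-ω * dphi p ω x)) = phi p ω x) ∧
      (∀ x : ℝ,
        1 / (2 * ω) * (-ω * dphi p ω x) + ω * (1 / (2 * ω) * dphi p ω x) = 0)) := by
  have hsq : ∀ l : ℝ, -1 < l → l < 1 → l ^ 2 < 1 := fun l h1 h2 => by nlinarith
  have hω := hsq ω hω1 hω2
  set k := √(1 - ω ^ 2)
  set u' := fun y => -tanh (p / 2 * y) * phi p 0 y
  have hdphi : dphi p ω = fun x => -(ω / k) * rescaleDeriv (phi p 0) u' p k x :=
    funext fun x => (hasDerivAt_phi_param hp hω x).deriv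
  have hphi : phi p ω = rescale (phi p 0) p k := funext (phi_eq_rescale hp hω.le)
  have hk2 : k ^ 2 = 1 - ω ^ 2 := sq_sqrt (by linarith)
  have hk : 0 < k := sqrt_pos.2 (by linarith)
  have hlin : ∀ x, -(deriv (deriv (dphi p ω)) x) + (1 - ω ^ 2) * dphi p ω x
      - (p + 1) * (phi p ω x) ^ p * dphi p ω x = 2 * ω * phi p ω x := fun x => by
    have h := linearized_rescaleDeriv (u' := u') hp (hasDerivAt_phi_zero hp)
      (hasDerivAt_neg_tanh_mul_phi_zero hp) (phi_zero_nonneg hp) hk x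
    rw [hdphi, deriv_const_mul_field', deriv_const_mul_field', hphi, ← hk2]
    field_simp
    linear_combination -ω * h
  refine ⟨fun x l h1 h2 => (hasDerivAt_phi_param hp (hsq l h1 h2) x).differentiableAt, hlin,
    fun hω0 => ⟨fun x => ?_, fun x => by ring⟩⟩
  rw [deriv_const_mul_field', deriv_const_mul_field']
  field_simp
  linear_combination hlin x
end

section
/- Let p > 0 and let I ⊆ ℝ be an open interval. Suppose u, v : I × ℝ → ℝ are continuously differentiable in (t,x), with u(t,·) three times continuously differentiable in x, solving the generalized Boussinesq system on I × ℝ, and suppose ν : I × ℝ → ℝ is continuously differentiable with ∂_x ν = u and ∂_t ν = v. Assume that u, v, ∂_x u, ∂_x²u, ∂_x³u, ν, ν·v and the products appearing below are, locally uniformly in t, dominated in absolute value by a fixed function in L¹(ℝ) ∩ L²(ℝ), and that ν(t,x)·(−∂_x²u + u − |u|^p u)(t,x) → 0 as |x| → ∞. Then the function I₁(t) = ∫_ℝ ν(t,x)·∂_t ν(t,x) dx is differentiable on I with I₁'(t) = ∫_ℝ v(t,x)² dx − ∫_ℝ u(t,x)² dx − ∫_ℝ (∂_x u(t,x))² dx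 + ∫_ℝ |u(t,x)|^{p+2} dx. -/
open MeasureTheory Real Filter Topology Asymptotics Set

/-!
Since `∂ₜν = v`, `I₁(t) = ∫ ν v`, and differentiation under the integral sign (justified by the
local domination) gives `I₁' = ∫ v² + ∫ ν ∂ₜv`. The second equation of the system says
`∂ₜv = ∂ₓF` with `F = -∂ₓ²u + u - |u|^p u`; integrating by parts against `∂ₓν = u` (the boundary
term `νF` vanishes at infinity) gives `∫ ν ∂ₓF = -∫ u F`. Finally
`u F = -u ∂ₓ²u + u² - |u|^(p+2)`, and a second integration by parts turns `∫ u ∂ₓ²u` into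
`-∫ (∂ₓu)²`.
-/

theorem differentiable_abs_rpow_mul {p : ℝ} (hp : 0 < p) :
    Differentiable ℝ (fun y : ℝ => |y| ^ p * y) := by
  intro y
  rcases eq_or_ne y 0 with rfl | hy
  · have hsmall : Tendsto (fun h : ℝ => |h| ^ p) (𝓝 0) (𝓝 0) := by
      simpa [hp.ne'] using
        (continuous_abs.rpow_const fun _ => Or.inr hp.le).tendsto (0 : ℝ)
    refine (hasDerivAt_iff_isLittleO_nhds_zero.mpr ?_).differentiableAt (f' := 0)
    simpa using ((isLittleO_one_iff ℝ).mpr hsmall).mul_isBigO (isBigO_refl (fun h : ℝ => h) _)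
  · exact ((differentiableAt_abs hy).rpow_const (.inl (abs_ne_zero.mpr hy))).mul
      differentiableAt_id

theorem mul_abs_rpow_mul_self {p : ℝ} (hp : p + 2 ≠ 0) (a : ℝ) :
    a * (|a| ^ p * a) = |a| ^ (p + 2) := by
  rw [rpow_add' (abs_nonneg a) hp, rpow_two, sq_abs]
  ring

section Domination

variable {α : Type*} [MeasurableSpace α] {μ : Measure α} {f f₁ f₂ g : α → ℝ}

theorem integrable_mul_of_abs_le (hg : Integrable (fun x => g x ^ 2) μ)
    (hf₁ : AEStronglyMeasurable f₁ μ) (hf₂ : AEStronglyMeasurable f₂ μ)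
    (h₁ : ∀ x, |f₁ x| ≤ g x) (h₂ : ∀ x, |f₂ x| ≤ g x) :
    Integrable (fun x => f₁ x * f₂ x) μ :=
  hg.mono' (hf₁.mul hf₂) (.of_forall fun x => by
    rw [norm_mul, sq]
    exact mul_le_mul (h₁ x) (h₂ x) (abs_nonneg _) ((abs_nonneg _).trans (h₁ x)))

theorem integrable_sq_of_abs_sq_le (hg : Integrable g μ) (hf : AEStronglyMeasurable f μ)
    (h : ∀ x, |f x| ^ 2 ≤ g x) : Integrable (fun x => f x ^ 2) μ :=
  hg.mono' (hf.pow 2) (.of_forall fun x => by simpa only [norm_pow, norm_eq_abs] using h x)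

end Domination

noncomputable def boussinesqFlux (p : ℝ) (u : ℝ → ℝ) (x : ℝ) : ℝ :=
  -deriv (deriv u) x + u x - |u x| ^ p * u x

theorem differentiable_boussinesqFlux {p : ℝ} (hp : 0 < p) {u : ℝ → ℝ}
    (hu : ContDiff ℝ 3 u) :
    Differentiable ℝ (boussinesqFlux p u) := by
  have hu' : Differentiable ℝ u := hu.differentiable (by norm_num)
  have hu'' : Differentiable ℝ (deriv (deriv u)) :=
    (hu.iterate_deriv' 1 2).differentiable (by norm_num)
  exact (hu''.neg.add hu').sub ((differentiable_abs_rpow_mul hp).comp hu')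

theorem mul_boussinesqFlux {p : ℝ} (hp : p + 2 ≠ 0) (u : ℝ → ℝ) (x : ℝ) :
    u x * boussinesqFlux p u x = -(u x * deriv (deriv u) x) + u x ^ 2 - |u x| ^ (p + 2) := by
  rw [boussinesqFlux, ← mul_abs_rpow_mul_self hp]
  ring

theorem integral_mul_boussinesqFlux {p : ℝ} (hp : p + 2 ≠ 0) {u : ℝ → ℝ}
    (hu : ContDiff ℝ 2 u)
    (huu' : Integrable fun x => u x * deriv u x)
    (huu'' : Integrable fun x => u x * deriv (deriv u) x)
    (hu'2 : Integrable fun x => deriv u x ^ 2)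
    (hu2 : Integrable fun x => u x ^ 2)
    (hup : Integrable fun x => |u x| ^ (p + 2)) :
    ∫ x, u x * boussinesqFlux p u x
      = (∫ x, deriv u x ^ 2) + (∫ x, u x ^ 2) - ∫ x, |u x| ^ (p + 2) := by
  -- no decay hypothesis is needed: `u ∂ₓu` and its derivative are integrable, so `u ∂ₓu → 0`
  have hibp : ∫ x, u x * deriv (deriv u) x = -∫ x, deriv u x ^ 2 := by
    simp_rw [sq]
    exact integral_mul_deriv_eq_deriv_mul_of_integrable
      (fun x _ => (hu.differentiable (by norm_num) x).hasDerivAt)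
      (fun x _ => ((hu.iterate_deriv' 1 1).differentiable (by norm_num) x).hasDerivAt)
      huu'' (hu'2.congr (.of_forall fun x => sq _)) huu'
  simp_rw [mul_boussinesqFlux hp]
  rw [integral_sub (huu''.fun_neg.fun_add hu2) hup, integral_add huu''.fun_neg hu2,
    integral_neg, hibp]
  ring

theorem integral_mul_deriv_boussinesqFlux {p : ℝ} (hp : 0 < p) {u ν : ℝ → ℝ}
    (hu : ContDiff ℝ 3 u) (hν : ∀ x, HasDerivAt ν (u x) x)
    (hdecay : Tendsto (fun x => ν x * boussinesqFlux p u x) (cocompact ℝ) (𝓝 0))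
    (hνF : Integrable fun x => ν x * deriv (boussinesqFlux p u) x)
    (huu' : Integrable fun x => u x * deriv u x)
    (huu'' : Integrable fun x => u x * deriv (deriv u) x)
    (hu'2 : Integrable fun x => deriv u x ^ 2)
    (hu2 : Integrable fun x => u x ^ 2)
    (hup : Integrable fun x => |u x| ^ (p + 2)) :
    ∫ x, ν x * deriv (boussinesqFlux p u) x
      = -(∫ x, deriv u x ^ 2) - (∫ x, u x ^ 2) + ∫ x, |u x| ^ (p + 2) := by
  have hp2 : p + 2 ≠ 0 := by linarith
  have huF : Integrable fun x => u x * boussinesqFlux p u x := by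
    simp_rw [mul_boussinesqFlux hp2]
    exact (huu''.fun_neg.fun_add hu2).sub' hup
  have hibp := integral_mul_deriv_eq_deriv_mul (fun x _ => hν x)
    (fun x _ => (differentiable_boussinesqFlux hp hu x).hasDerivAt) hνF huF
    (hdecay.mono_left atBot_le_cocompact) (hdecay.mono_left atTop_le_cocompact)
  rw [hibp, integral_mul_boussinesqFlux hp2 (hu.of_le (by norm_num)) huu' huu'' hu'2 hu2 hup]
  ring

theorem integral_mul_deriv_boussinesqFlux_of_abs_le {p : ℝ} (hp : 0 < p) {u ν g : ℝ → ℝ}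
    (hu : ContDiff ℝ 3 u) (hν : ∀ x, HasDerivAt ν (u x) x)
    (hdecay : Tendsto (fun x => ν x * boussinesqFlux p u x) (cocompact ℝ) (𝓝 0))
    (hνF : Integrable fun x => ν x * deriv (boussinesqFlux p u) x)
    (hg : Integrable g) (hg2 : Integrable fun x => g x ^ 2)
    (h_u : ∀ x, |u x| ≤ g x) (h_u' : ∀ x, |deriv u x| ≤ g x)
    (h_u'' : ∀ x, |deriv (deriv u) x| ≤ g x)
    (h_u2 : ∀ x, |u x| ^ 2 ≤ g x) (h_u'2 : ∀ x, |deriv u x| ^ 2 ≤ g x)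
    (h_up : ∀ x, |u x| ^ (p + 2) ≤ g x) :
    ∫ x, ν x * deriv (boussinesqFlux p u) x
      = -(∫ x, deriv u x ^ 2) - (∫ x, u x ^ 2) + ∫ x, |u x| ^ (p + 2) := by
  have hcu : AEStronglyMeasurable u := hu.continuous.aestronglyMeasurable
  have hcu' : AEStronglyMeasurable (deriv u) :=
    (hu.iterate_deriv' 2 1).continuous.aestronglyMeasurable
  have hcu'' : AEStronglyMeasurable (deriv (deriv u)) :=
    (hu.iterate_deriv' 1 2).continuous.aestronglyMeasurable
  have hup : Integrable fun x => |u x| ^ (p + 2) :=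
    hg.mono' (hu.continuous.abs.rpow_const fun _ => .inr (by linarith)).aestronglyMeasurable
      (.of_forall fun x => by
        simpa only [norm_eq_abs, abs_of_nonneg (rpow_nonneg (abs_nonneg _) _)] using h_up x)
  exact integral_mul_deriv_boussinesqFlux hp hu hν hdecay hνF
    (integrable_mul_of_abs_le hg2 hcu hcu' h_u h_u')
    (integrable_mul_of_abs_le hg2 hcu hcu'' h_u h_u'')
    (integrable_sq_of_abs_sq_le hg hcu' h_u'2) (integrable_sq_of_abs_sq_le hg hcu h_u2) hup

section JointlyC1

variable {I : Set ℝ} {w : ℝ → ℝ → ℝ}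

theorem differentiableAt_of_contDiffOn_prod_univ (hI : IsOpen I)
    (hw : ContDiffOn ℝ 1 (fun q : ℝ × ℝ => w q.1 q.2) (I ×ˢ univ)) {s : ℝ} (hs : s ∈ I)
    (x : ℝ) :
    DifferentiableAt ℝ (fun q : ℝ × ℝ => w q.1 q.2) (s, x) :=
  (hw.differentiableOn one_ne_zero).differentiableAt
    ((hI.prod isOpen_univ).mem_nhds (mk_mem_prod hs (mem_univ x)))

theorem differentiableAt_left_of_contDiffOn_prod_univ (hI : IsOpen I)
    (hw : ContDiffOn ℝ 1 (fun q : ℝ × ℝ => w q.1 q.2) (I ×ˢ univ)) {s : ℝ} (hs : s ∈ I)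
    (x : ℝ) :
    DifferentiableAt ℝ (fun r => w r x) s :=
  DifferentiableAt.comp (g := fun q : ℝ × ℝ => w q.1 q.2) (f := fun r => (r, x)) s
    (differentiableAt_of_contDiffOn_prod_univ hI hw hs x)
    (differentiableAt_id.prodMk (differentiableAt_const x))

theorem differentiable_right_of_contDiffOn_prod_univ (hI : IsOpen I)
    (hw : ContDiffOn ℝ 1 (fun q : ℝ × ℝ => w q.1 q.2) (I ×ˢ univ)) {s : ℝ} (hs : s ∈ I) :
    Differentiable ℝ (w s) := fun x =>
  (differentiableAt_of_contDiffOn_prod_univ hI hw hs x).comp x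
    ((differentiableAt_const s).prodMk differentiableAt_id)

theorem continuous_deriv_left_of_contDiffOn_prod_univ (hI : IsOpen I)
    (hw : ContDiffOn ℝ 1 (fun q : ℝ × ℝ => w q.1 q.2) (I ×ˢ univ)) {s : ℝ} (hs : s ∈ I) :
    Continuous fun x => deriv (fun r => w r x) s := by
  have hpartial : ∀ x, deriv (fun r => w r x) s
      = fderiv ℝ (fun q : ℝ × ℝ => w q.1 q.2) (s, x) (1, 0) := fun x => by
    have h := (differentiableAt_of_contDiffOn_prod_univ hI hw hs x).hasFDerivAt.comp_hasDerivAt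
      s ((hasDerivAt_id s).prodMk (hasDerivAt_const s x))
    exact h.deriv
  simp_rw [hpartial]
  have hcont := (hw.continuousOn_fderiv_of_isOpen (hI.prod isOpen_univ) le_rfl
    ).comp_continuous (continuous_const.prodMk continuous_id) fun x => mk_mem_prod hs (mem_univ x)
  exact hcont.clm_apply continuous_const

end JointlyC1

theorem hasDerivAt_integral_mul_deriv_left {I : Set ℝ} (hI : IsOpen I) {ν v : ℝ → ℝ → ℝ}
    (hν : ContDiffOn ℝ 1 (fun q : ℝ × ℝ => ν q.1 q.2) (I ×ˢ univ))
    (hv : ContDiffOn ℝ 1 (fun q : ℝ × ℝ => v q.1 q.2) (I ×ˢ univ))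
    (hνt : ∀ s ∈ I, ∀ x, deriv (fun r => ν r x) s = v s x)
    {t : ℝ} (ht : t ∈ I) {g : ℝ → ℝ} (hg : Integrable g)
    (hbound : ∀ᶠ s in 𝓝 t, ∀ x, |ν s x * v s x| ≤ g x ∧ |v s x| ^ 2 ≤ g x ∧
      |ν s x * deriv (fun r => v r x) s| ≤ g x) :
    HasDerivAt (fun s => ∫ x, ν s x * deriv (fun r => ν r x) s)
      ((∫ x, v t x ^ 2) + ∫ x, ν t x * deriv (fun r => v r x) t) t := by
  have hcont : ∀ s ∈ I, Continuous (ν s) ∧ Continuous (v s) := fun s hs =>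
    ⟨(differentiable_right_of_contDiffOn_prod_univ hI hν hs).continuous,
      (differentiable_right_of_contDiffOn_prod_univ hI hv hs).continuous⟩
  obtain ⟨ε, hε, hball⟩ := Metric.eventually_nhds_iff_ball.mp
    ((hI.eventually_mem ht).and hbound)
  have hbound_t := fun x => (hball t (Metric.mem_ball_self hε)).2 x
  have hv2 := integrable_sq_of_abs_sq_le hg (hcont t ht).2.aestronglyMeasurable
    fun x => (hbound_t x).2.1
  have hνvt : Integrable fun x => ν t x * deriv (fun r => v r x) t :=
    hg.mono' ((hcont t ht).1.mul
      (continuous_deriv_left_of_contDiffOn_prod_univ hI hv ht)).aestronglyMeasurable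
      (.of_forall fun x => (hbound_t x).2.2)
  have hderiv : ∀ s ∈ I, ∀ x, HasDerivAt (fun r => ν r x * v r x)
      (v s x ^ 2 + ν s x * deriv (fun r => v r x) s) s := fun s hs x => by
    have hνs := (differentiableAt_left_of_contDiffOn_prod_univ hI hν hs x).hasDerivAt
    rw [hνt s hs x] at hνs
    simpa only [sq] using
      hνs.fun_mul (differentiableAt_left_of_contDiffOn_prod_univ hI hv hs x).hasDerivAt
  have hderiv_le : ∀ s ∈ Metric.ball t ε, ∀ x,
      |v s x ^ 2 + ν s x * deriv (fun r => v r x) s| ≤ g x + g x := fun s hs x => by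
    obtain ⟨-, hv2_le, hνvt_le⟩ := (hball s hs).2 x
    exact (abs_add_le _ _).trans (add_le_add ((abs_pow _ _).trans_le hv2_le) hνvt_le)
  have hmain := (hasDerivAt_integral_of_dominated_loc_of_deriv_le (μ := volume)
    (Metric.ball_mem_nhds t hε)
    ((hI.eventually_mem ht).mono fun s hs =>
      ((hcont s hs).1.fun_mul (hcont s hs).2).aestronglyMeasurable)
    (hg.mono' ((hcont t ht).1.mul (hcont t ht).2).aestronglyMeasurable
      (.of_forall fun x => (hbound_t x).1))
    (hv2.add hνvt).aestronglyMeasurable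
    (.of_forall fun x s hs => hderiv_le s hs x) (hg.add hg)
    (.of_forall fun x s hs => hderiv s (hball s hs).1 x)).2
  rw [← integral_add hv2 hνvt]
  refine hmain.congr_of_eventuallyEq ?_
  filter_upwards [hI.eventually_mem ht] with s hs
  simp_rw [hνt s hs]

theorem virial_identity_I1_general (p : ℝ) (hp : 0 < p)
    (I : Set ℝ) (hIopen : IsOpen I)
    (u v ν : ℝ → ℝ → ℝ)
    (hv : ContDiffOn ℝ 1 (fun q : ℝ × ℝ => v q.1 q.2) (I ×ˢ Set.univ))
    (hν : ContDiffOn ℝ 1 (fun q : ℝ × ℝ => ν q.1 q.2) (I ×ˢ Set.univ))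
    (hu3 : ∀ t ∈ I, ContDiff ℝ 3 (u t))
    (heq2 : ∀ t ∈ I, ∀ x : ℝ,
      deriv (fun s => v s x) t
        = deriv (fun x' => -(deriv (deriv (u t)) x') + u t x'
            - |u t x'| ^ p * u t x') x)
    (hνx : ∀ t ∈ I, ∀ x : ℝ, deriv (ν t) x = u t x)
    (hνt : ∀ t ∈ I, ∀ x : ℝ, deriv (fun s => ν s x) t = v t x)
    (hdom : ∀ t₀ ∈ I, ∃ δ > 0, ∃ g : ℝ → ℝ,
      Integrable g ∧ Integrable (fun x => (g x) ^ 2) ∧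
      ∀ t ∈ I, |t - t₀| < δ → ∀ x : ℝ,
        |u t x| ≤ g x ∧ |v t x| ≤ g x ∧ |deriv (u t) x| ≤ g x ∧
        |deriv (deriv (u t)) x| ≤ g x ∧
        |deriv (deriv (deriv (u t))) x| ≤ g x ∧
        |ν t x| ≤ g x ∧ |ν t x * v t x| ≤ g x ∧
        |v t x| ^ 2 ≤ g x ∧ |u t x| ^ 2 ≤ g x ∧ |deriv (u t) x| ^ 2 ≤ g x ∧
        |u t x| ^ (p + 2) ≤ g x ∧
        |ν t x * deriv (fun s => v s x) t| ≤ g x)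
    (hdecay : ∀ t ∈ I,
      Tendsto (fun x => ν t x * (-(deriv (deriv (u t)) x) + u t x
        - |u t x| ^ p * u t x)) (cocompact ℝ) (nhds 0)) :
    ∀ t ∈ I,
      HasDerivAt (fun s => ∫ x : ℝ, ν s x * deriv (fun r => ν r x) s)
        ((∫ x : ℝ, (v t x) ^ 2) - (∫ x : ℝ, (u t x) ^ 2)
          - (∫ x : ℝ, (deriv (u t) x) ^ 2)
          + ∫ x : ℝ, |u t x| ^ (p + 2)) t := by
  intro t ht
  obtain ⟨δ, hδ, g, hg, hg2, hbound⟩ := hdom t ht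
  choose hu_le _ hu'_le hu''_le _ _ hνv_le hv2_le hu2_le hu'2_le hup_le hνvt_le using hbound
  have htt : |t - t| < δ := by simpa using hδ
  have hvt : ∀ x, deriv (fun s => v s x) t = deriv (boussinesqFlux p (u t)) x := heq2 t ht
  have hν_slice := differentiable_right_of_contDiffOn_prod_univ hIopen hν ht
  have hνF : Integrable fun x => ν t x * deriv (boussinesqFlux p (u t)) x :=
    hg.mono' (hν_slice.continuous.aestronglyMeasurable.mul
      (measurable_deriv _).aestronglyMeasurable)
      (.of_forall fun x => hvt x ▸ hνvt_le t ht htt x)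
  have hspace := integral_mul_deriv_boussinesqFlux_of_abs_le hp (hu3 t ht)
    (fun x => hνx t ht x ▸ (hν_slice x).hasDerivAt) (hdecay t ht) hνF hg hg2
    (hu_le t ht htt) (hu'_le t ht htt) (hu''_le t ht htt)
    (hu2_le t ht htt) (hu'2_le t ht htt) (hup_le t ht htt)
  have htime := hasDerivAt_integral_mul_deriv_left hIopen hν hv hνt ht hg (by
    filter_upwards [hIopen.mem_nhds ht, Metric.ball_mem_nhds t hδ] with s hs hsδ x
    exact ⟨hνv_le s hs hsδ x, hv2_le s hs hsδ x, hνvt_le s hs hsδ x⟩)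
  simp only [hvt, hspace] at htime
  convert htime using 1
  ring

/-- Virial identity for `I₁(t) = ∫ ν ∂ₜν dx`, where `∂ₓν = u` and `∂ₜν = v`
and `(u,v)` solves the generalized Boussinesq system
`∂ₜu = ∂ₓv`, `∂ₜv = ∂ₓ(-∂ₓ²u + u - |u|^p u)` on an open interval `I`. -/
theorem virial_identity_I1 (p : ℝ) (hp : 0 < p)
    (I : Set ℝ) (hIopen : IsOpen I) (hIconn : I.OrdConnected)
    (u v ν : ℝ → ℝ → ℝ)
    (hu : ContDiffOn ℝ 1 (fun q : ℝ × ℝ => u q.1 q.2) (I ×ˢ Set.univ))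
    (hv : ContDiffOn ℝ 1 (fun q : ℝ × ℝ => v q.1 q.2) (I ×ˢ Set.univ))
    (hν : ContDiffOn ℝ 1 (fun q : ℝ × ℝ => ν q.1 q.2) (I ×ˢ Set.univ))
    (hu3 : ∀ t ∈ I, ContDiff ℝ 3 (u t))
    (heq1 : ∀ t ∈ I, ∀ x : ℝ, deriv (fun s => u s x) t = deriv (v t) x)
    (heq2 : ∀ t ∈ I, ∀ x : ℝ,
      deriv (fun s => v s x) t
        = deriv (fun x' => -(deriv (deriv (u t)) x') + u t x'
            - |u t x'| ^ p * u t x') x)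
    (hνx : ∀ t ∈ I, ∀ x : ℝ, deriv (ν t) x = u t x)
    (hνt : ∀ t ∈ I, ∀ x : ℝ, deriv (fun s => ν s x) t = v t x)
    (hdom : ∀ t₀ ∈ I, ∃ δ > 0, ∃ g : ℝ → ℝ,
      Integrable g ∧ Integrable (fun x => (g x) ^ 2) ∧
      ∀ t ∈ I, |t - t₀| < δ → ∀ x : ℝ,
        |u t x| ≤ g x ∧ |v t x| ≤ g x ∧ |deriv (u t) x| ≤ g x ∧
        |deriv (deriv (u t)) x| ≤ g x ∧
        |deriv (deriv (deriv (u t))) x| ≤ g x ∧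
        |ν t x| ≤ g x ∧ |ν t x * v t x| ≤ g x ∧
        |v t x| ^ 2 ≤ g x ∧ |u t x| ^ 2 ≤ g x ∧ |deriv (u t) x| ^ 2 ≤ g x ∧
        |u t x| ^ (p + 2) ≤ g x ∧
        |ν t x * deriv (fun s => v s x) t| ≤ g x)
    (hdecay : ∀ t ∈ I,
      Tendsto (fun x => ν t x * (-(deriv (deriv (u t)) x) + u t x
        - |u t x| ^ p * u t x)) (cocompact ℝ) (nhds 0)) :
    ∀ t ∈ I,
      HasDerivAt (fun s => ∫ x : ℝ, ν s x * deriv (fun r => ν r x) s)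
        ((∫ x : ℝ, (v t x) ^ 2) - (∫ x : ℝ, (u t x) ^ 2)
          - (∫ x : ℝ, (deriv (u t) x) ^ 2)
          + ∫ x : ℝ, |u t x| ^ (p + 2)) t :=
  virial_identity_I1_general p hp I hIopen u v ν hv hν hu3 heq2 hνx hνt hdom hdecay
end
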